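/- Let β > -1, and let p be a bivariate polynomial of degree at most 2 on the reference triangle T (vertices v₁=(1,0), v₂=(0,1), v₃=(0,0)) whose Crouzeix–Raviart edge averages vanish. Then ν_β · N · (p(v₁),p(v₂),p(v₃))ᵀ = (G₁(p),G₂(p),G₃(p))ᵀ, where N is the 3×3 matrix with diagonal entries 2 and off-diagonal entries -(3β+4), ν_β = B(β+2,β+1)/(3(2β+3)), and G_j(p) = ∫₀¹ t^β(1-t)^β p(t v_j + (1-t)m*) dt with m* the barycenter of T. -/

import Mathlib

open MvPolynomial

noncomputable section

/-- Vertices of the reference triangle. -/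
def vtx : Fin 3 → ℝ × ℝ := ![(1, 0), (0, 1), (0, 0)]

/-- Barycentric coordinates on the reference triangle. -/
def lam : Fin 3 → ℝ × ℝ → ℝ := ![fun q => q.1, fun q => q.2, fun q => 1 - q.1 - q.2]

/-- The AF3 basis functions φᵢ = λᵢ(1 - 3λ_{i+1} - 3λ_{i+2}). -/
def bphi (i : Fin 3) (q : ℝ × ℝ) : ℝ :=
  lam i q * (1 - 3 * lam (i + 1) q - 3 * lam (i + 2) q)

/-- The AF3 basis functions ϕᵢ = 6 λ_{i+1} λ_{i+2}. -/
def sphi (i : Fin 3) (q : ℝ × ℝ) : ℝ := 6 * lam (i + 1) q * lam (i + 2) q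

/-- Evaluation of a bivariate polynomial at a point of ℝ². -/
def evalP (p : MvPolynomial (Fin 2) ℝ) (q : ℝ × ℝ) : ℝ :=
  MvPolynomial.eval ![q.1, q.2] p

/-- Barycenter of the reference triangle. -/
def bary : ℝ × ℝ := (1 / 3 : ℝ) • (vtx 0 + vtx 1 + vtx 2)

/-- The Euler beta function. -/
def eulerBeta (z1 z2 : ℝ) : ℝ :=
  ∫ u in (0:ℝ)..1, u ^ (z1 - 1) * (1 - u) ^ (z2 - 1)

/-!
Write `p = c + ℓ + h` with `h` its homogeneous quadratic part. Along a segment from `Q` to `P`,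
`p` is a quadratic polynomial in `t` with leading coefficient `h (P - Q)`, so its average over
an edge is the mean of the endpoint values minus `h (P - Q) / 6`, and its integral against
`t ^ β (1 - t) ^ β` is a combination of `B(β + 1 + k, β + 1)`, `k ≤ 2`, all multiples of
`B(β + 2, β + 1)` by the recurrence of the Beta function. Vanishing edge averages therefore fix
`h` on the three edges in terms of the vertex values, and `p(m*)`, `h (v_j - m*)` are determined
by the vertex values and `h` on the edges, because `m*` is the centroid.
-/

open MeasureTheory ProbabilityTheory

lemma ofReal_eulerBeta (a b : ℝ) : (eulerBeta a b : ℂ) = Complex.betaIntegral a b := by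
  rw [eulerBeta, Complex.betaIntegral, ← intervalIntegral.integral_ofReal]
  refine intervalIntegral.integral_congr fun x hx => ?_
  rw [Set.uIcc_of_le zero_le_one] at hx
  push_cast
  rw [Complex.ofReal_cpow hx.1, Complex.ofReal_cpow (sub_nonneg.2 hx.2)]
  push_cast
  ring

lemma eulerBeta_eq_beta {a b : ℝ} (ha : 0 < a) (hb : 0 < b) : eulerBeta a b = beta a b := by
  rw [beta_eq_betaIntegralReal a b ha hb, ← ofReal_eulerBeta, Complex.ofReal_re]

lemma ProbabilityTheory.beta_add_one_left {a b : ℝ} (ha : 0 < a) (hb : 0 < b) :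
    beta (a + 1) b = a / (a + b) * beta a b := by
  have hab : 0 < a + b := add_pos ha hb
  rw [beta, beta, Real.Gamma_add_one ha.ne', add_right_comm, Real.Gamma_add_one hab.ne']
  field_simp [(Real.Gamma_pos_of_pos hab).ne']

lemma intervalIntegrable_rpow_mul_one_sub_rpow {a b : ℝ} (ha : -1 < a) (hb : -1 < b) :
    IntervalIntegrable (fun x : ℝ => x ^ a * (1 - x) ^ b) volume 0 1 := by
  have h := Complex.betaIntegral_convergent (u := a + 1) (v := b + 1)
    (by simp; linarith) (by simp; linarith)
  rw [intervalIntegrable_iff_integrableOn_Ioc_of_le zero_le_one] at h ⊢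
  refine IntegrableOn.congr_fun h.re (fun x hx => ?_) measurableSet_Ioc
  simp only [add_sub_cancel_right]
  rw [← Complex.ofReal_one, ← Complex.ofReal_sub, ← Complex.ofReal_cpow hx.1.le,
    ← Complex.ofReal_cpow (sub_nonneg.2 hx.2), ← Complex.ofReal_mul]
  exact Complex.ofReal_re _

lemma integral_rpow_mul_one_sub_rpow_mul_pow (a b : ℝ) (k : ℕ) :
    ∫ t in (0:ℝ)..1, t ^ a * (1 - t) ^ b * t ^ k = eulerBeta (a + 1 + k) (b + 1) := by
  refine intervalIntegral.integral_congr_ae (Filter.Eventually.of_forall fun t ht => ?_)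
  have ht0 : t ≠ 0 := (Set.uIoc_of_le (zero_le_one' ℝ) ▸ ht).1.ne'
  rw [add_right_comm, add_sub_cancel_right, add_sub_cancel_right, Real.rpow_add_natCast ht0]
  exact mul_right_comm _ _ _

lemma integral_rpow_mul_one_sub_rpow_mul_quadratic {β : ℝ} (hβ : -1 < β) (A B C : ℝ) :
    ∫ t in (0:ℝ)..1, t ^ β * (1 - t) ^ β * (A + B * t + C * t ^ 2) =
      eulerBeta (β + 2) (β + 1) * (2 * A + B + (β + 2) / (2 * β + 3) * C) := by
  have hw := intervalIntegrable_rpow_mul_one_sub_rpow hβ hβ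
  have hwk (k : ℕ) : IntervalIntegrable (fun t : ℝ => t ^ β * (1 - t) ^ β * t ^ k) volume 0 1 :=
    hw.mul_continuousOn (continuous_pow k).continuousOn
  have expand : (fun t : ℝ => t ^ β * (1 - t) ^ β * (A + B * t + C * t ^ 2)) = fun t =>
      A * (t ^ β * (1 - t) ^ β * t ^ 0) + B * (t ^ β * (1 - t) ^ β * t ^ 1)
        + C * (t ^ β * (1 - t) ^ β * t ^ 2) := by
    ext t; ring
  rw [expand, intervalIntegral.integral_add (((hwk 0).const_mul A).add ((hwk 1).const_mul B))
      ((hwk 2).const_mul C),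
    intervalIntegral.integral_add ((hwk 0).const_mul A) ((hwk 1).const_mul B)]
  simp only [intervalIntegral.integral_const_mul, integral_rpow_mul_one_sub_rpow_mul_pow]
  have hβ1 : 0 < β + 1 := by linarith
  have hβ2 : 0 < β + 2 := by linarith
  have hB₀ : eulerBeta (β + 1 + 0) (β + 1) = 2 * eulerBeta (β + 2) (β + 1) := by
    rw [add_zero, eulerBeta_eq_beta hβ1 hβ1, eulerBeta_eq_beta hβ2 hβ1,
      show β + 2 = β + 1 + 1 by ring, beta_add_one_left hβ1 hβ1]
    field_simp
    ring
  have hB₂ :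
      eulerBeta (β + 1 + 2) (β + 1) = (β + 2) / (2 * β + 3) * eulerBeta (β + 2) (β + 1) := by
    rw [eulerBeta_eq_beta (by linarith) hβ1, eulerBeta_eq_beta hβ2 hβ1,
      show β + 1 + 2 = β + 2 + 1 by ring, beta_add_one_left hβ2 hβ1]
    ring
  push_cast
  rw [hB₀, hB₂, show β + 1 + 1 = β + 2 by ring]
  ring

lemma integral_quadratic (A B C : ℝ) :
    ∫ t in (0:ℝ)..1, (A + B * t + C * t ^ 2) = A + B / 2 + C / 3 := by
  have h1 : IntervalIntegrable (fun t : ℝ => B * t) volume 0 1 :=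
    (continuous_const.mul continuous_id).intervalIntegrable 0 1
  have h2 : IntervalIntegrable (fun t : ℝ => C * t ^ 2) volume 0 1 :=
    (continuous_const.mul (continuous_pow 2)).intervalIntegrable 0 1
  rw [intervalIntegral.integral_add (intervalIntegrable_const.add h1) h2,
    intervalIntegral.integral_add intervalIntegrable_const h1, intervalIntegral.integral_const,
    intervalIntegral.integral_const_mul, intervalIntegral.integral_const_mul, integral_id,
    integral_pow]
  norm_num
  ring

def quadEval (a : Fin 6 → ℝ) (q : ℝ × ℝ) : ℝ :=
  a 0 + a 1 * q.1 + a 2 * q.2 + a 3 * q.1 ^ 2 + a 4 * (q.1 * q.2) + a 5 * q.2 ^ 2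

def quadPart (a : Fin 6 → ℝ) (q : ℝ × ℝ) : ℝ :=
  a 3 * q.1 ^ 2 + a 4 * (q.1 * q.2) + a 5 * q.2 ^ 2

lemma exists_monomial_eq_quadEval (c : ℝ) {i j : ℕ} (hij : i + j ≤ 2) :
    ∃ a, (fun q : ℝ × ℝ => c * (q.1 ^ i * q.2 ^ j)) = quadEval a := by
  obtain ⟨rfl, rfl⟩ | ⟨rfl, rfl⟩ | ⟨rfl, rfl⟩ | ⟨rfl, rfl⟩ | ⟨rfl, rfl⟩ | ⟨rfl, rfl⟩ :
      (i = 0 ∧ j = 0) ∨ (i = 1 ∧ j = 0) ∨ (i = 0 ∧ j = 1) ∨ (i = 2 ∧ j = 0) ∨ (i = 1 ∧ j = 1) ∨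
        (i = 0 ∧ j = 2) := by omega
  · exact ⟨Pi.single 0 c, by ext; simp [quadEval]⟩
  · exact ⟨Pi.single 1 c, by ext; simp [quadEval]⟩
  · exact ⟨Pi.single 2 c, by ext; simp [quadEval]⟩
  · exact ⟨Pi.single 3 c, by ext; simp [quadEval]⟩
  · exact ⟨Pi.single 4 c, by ext; simp [quadEval]⟩
  · exact ⟨Pi.single 5 c, by ext; simp [quadEval]⟩

lemma exists_evalP_eq_quadEval {p : MvPolynomial (Fin 2) ℝ} (hp : p.totalDegree ≤ 2) :
    ∃ a, evalP p = quadEval a := by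
  have expand : evalP p =
      ∑ d ∈ p.support, fun q : ℝ × ℝ => coeff d p * (q.1 ^ d 0 * q.2 ^ d 1) := by
    ext q
    simp [evalP, MvPolynomial.eval_eq', Fin.prod_univ_two, Finset.sum_apply]
  rw [expand]
  refine Finset.sum_induction _ (fun f => ∃ a, f = quadEval a) ?_ ⟨0, ?_⟩ fun d hd => ?_
  · rintro _ _ ⟨a, rfl⟩ ⟨b, rfl⟩
    exact ⟨a + b, by ext; simp only [quadEval, Pi.add_apply]; ring⟩
  · ext; simp [quadEval]
  · refine exists_monomial_eq_quadEval _ ((le_totalDegree hd).trans' (le_of_eq ?_) |>.trans hp)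
    simp [Finsupp.sum_fintype, Fin.sum_univ_two]

lemma quadEval_segment (a : Fin 6 → ℝ) (P Q : ℝ × ℝ) (t : ℝ) :
    quadEval a (t • P + (1 - t) • Q) = quadEval a Q
      + (quadEval a P - quadEval a Q - quadPart a (P - Q)) * t + quadPart a (P - Q) * t ^ 2 := by
  simp only [quadEval, quadPart, Prod.fst_add, Prod.snd_add, Prod.smul_fst, Prod.smul_snd,
    Prod.fst_sub, Prod.snd_sub, smul_eq_mul]
  ring

lemma quadEval_centroid (a : Fin 6 → ℝ) (P Q R : ℝ × ℝ) :
    quadEval a ((1 / 3 : ℝ) • (P + Q + R)) = (quadEval a P + quadEval a Q + quadEval a R) / 3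
      - (quadPart a (Q - R) + quadPart a (R - P) + quadPart a (P - Q)) / 9 := by
  simp only [quadEval, quadPart, Prod.fst_add, Prod.snd_add, Prod.smul_fst, Prod.smul_snd,
    Prod.fst_sub, Prod.snd_sub, smul_eq_mul]
  ring

lemma quadPart_sub_centroid (a : Fin 6 → ℝ) (P Q R : ℝ × ℝ) :
    quadPart a (P - (1 / 3 : ℝ) • (P + Q + R)) =
      (2 * quadPart a (R - P) + 2 * quadPart a (P - Q) - quadPart a (Q - R)) / 9 := by
  simp only [quadPart, Prod.fst_add, Prod.snd_add, Prod.smul_fst, Prod.smul_snd,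
    Prod.fst_sub, Prod.snd_sub, smul_eq_mul]
  ring

lemma integral_quadEval_segment (a : Fin 6 → ℝ) (P Q : ℝ × ℝ) :
    ∫ t in (0:ℝ)..1, quadEval a (t • P + (1 - t) • Q) =
      (quadEval a P + quadEval a Q) / 2 - quadPart a (P - Q) / 6 := by
  simp only [quadEval_segment, integral_quadratic]
  ring

lemma integral_rpow_mul_one_sub_rpow_mul_quadEval_segment {β : ℝ} (hβ : -1 < β)
    (a : Fin 6 → ℝ) (P Q : ℝ × ℝ) :
    ∫ t in (0:ℝ)..1, t ^ β * (1 - t) ^ β * quadEval a (t • P + (1 - t) • Q) =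
      eulerBeta (β + 2) (β + 1) * (quadEval a P + quadEval a Q
        - (β + 1) / (2 * β + 3) * quadPart a (P - Q)) := by
  have h23 : 2 * β + 3 ≠ 0 := by linarith
  simp only [quadEval_segment, integral_rpow_mul_one_sub_rpow_mul_quadratic hβ]
  congr 1
  field_simp
  ring

lemma bary_eq_centroid (j : Fin 3) : bary = (1 / 3 : ℝ) • (vtx j + vtx (j + 1) + vtx (j + 2)) := by
  fin_cases j <;> simp [bary, vtx]

theorem second_family_linear_system (β : ℝ) (hβ : -1 < β)
    (p : MvPolynomial (Fin 2) ℝ) (hp : p.totalDegree ≤ 2)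
    (hCR : ∀ j : Fin 3,
      (∫ t in (0:ℝ)..1, evalP p (t • vtx (j + 1) + (1 - t) • vtx (j + 2))) = 0) :
    ∀ j : Fin 3,
      (eulerBeta (β + 2) (β + 1) / (3 * (2 * β + 3))) *
        (2 * evalP p (vtx j) +
         (-(3 * β + 4)) * (evalP p (vtx (j + 1)) + evalP p (vtx (j + 2)))) =
      ∫ t in (0:ℝ)..1, t ^ β * (1 - t) ^ β * evalP p (t • vtx j + (1 - t) • bary) := by
  obtain ⟨a, hpa⟩ := exists_evalP_eq_quadEval hp
  have edge (k : Fin 3) : quadPart a (vtx (k + 1) - vtx (k + 2)) =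
      3 * (quadEval a (vtx (k + 1)) + quadEval a (vtx (k + 2))) := by
    have h := hCR k
    rw [hpa, integral_quadEval_segment] at h
    linarith
  intro j
  have edge₁ := edge (j + 1)
  have edge₂ := edge (j + 2)
  simp only [add_assoc, Fin.reduceAdd, add_zero] at edge₁ edge₂
  have h23 : 2 * β + 3 ≠ 0 := by linarith
  rw [hpa, integral_rpow_mul_one_sub_rpow_mul_quadEval_segment hβ, bary_eq_centroid j,
    quadEval_centroid, quadPart_sub_centroid, edge j, edge₁, edge₂, div_mul_eq_mul_div,
    mul_div_assoc]
  congr 1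
  field_simp
  ring

end
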